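/- Let f be a convex function on a ball B(x₀, δ) ⊆ ℝ² that is Lipschitz there with constant L. Let ξ : [0, τ₁] → B(x₀, δ) be a Lipschitz curve with ξ(0) = x₀ whose right derivative at 0 satisfies ξ'₊(0) = (1,0), and suppose inf_{s ∈ [0, τ₁]} diam ∂f(ξ(s)) > 0. Then there exists τ₂ ∈ (0, τ₁) such that inf_{s ∈ (0, τ₂]} diam ⟨e₂, ∂f(ξ(s))⟩ > 0, where e₂ = (0,1) and ⟨e₂, ∂f(ξ(s))⟩ := {⟨e₂, v⟩ : v ∈ ∂f(ξ(s))} ⊆ ℝ. -/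
import Mathlib


open Set Filter Topology Metric
open scoped RealInnerProductSpace

noncomputable section

/-- The subdifferential of `f` at `x` relative to the set `B`. -/
def subdiff (B : Set (EuclideanSpace ℝ (Fin 2)))
    (f : EuclideanSpace ℝ (Fin 2) → ℝ) (x : EuclideanSpace ℝ (Fin 2)) :
    Set (EuclideanSpace ℝ (Fin 2)) :=
  {v | ∀ y ∈ B, f x + ⟪v, y - x⟫ ≤ f y}

/-- The point `(a, b)` of `ℝ²`. -/
def mk2 (a b : ℝ) : EuclideanSpace ℝ (Fin 2) :=
  (WithLp.equiv 2 (Fin 2 → ℝ)).symm ![a, b]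

lemma inner_mk2_01 (v : EuclideanSpace ℝ (Fin 2)) : ⟪mk2 0 1, v⟫ = v 1 := by
  simp [mk2, PiLp.inner_apply, Fin.sum_univ_two]

lemma inner_smul_e1 (v : EuclideanSpace ℝ (Fin 2)) (s : ℝ) :
    ⟪v, s • mk2 1 0⟫ = s * v 0 := by
  simp [mk2, PiLp.inner_apply, Fin.sum_univ_two, mul_comm]

lemma norm_smul_e1 (s : ℝ) : ‖s • mk2 1 0‖ = |s| := by
  rw [norm_smul]
  simp [mk2, EuclideanSpace.norm_eq, Fin.sum_univ_two]

lemma dist_eq_two (v w : EuclideanSpace ℝ (Fin 2)) :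
    dist v w = Real.sqrt ((v 0 - w 0)^2 + (v 1 - w 1)^2) := by
  simp [EuclideanSpace.dist_eq, Fin.sum_univ_two, Real.dist_eq, sq_abs]

lemma abs_apply1_le_norm (v : EuclideanSpace ℝ (Fin 2)) : |v 1| ≤ ‖v‖ := by
  rw [EuclideanSpace.norm_eq, ← Real.sqrt_sq_eq_abs]
  apply Real.sqrt_le_sqrt
  simp [Fin.sum_univ_two, sq_abs, sq_nonneg]

lemma norm_subdiff_le {x₀ : EuclideanSpace ℝ (Fin 2)} {δ : ℝ}
    {f : EuclideanSpace ℝ (Fin 2) → ℝ} {L : NNReal}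
    (hlip : LipschitzOnWith L f (ball x₀ δ)) {x v : EuclideanSpace ℝ (Fin 2)}
    (hx : x ∈ ball x₀ δ) (hv : v ∈ subdiff (ball x₀ δ) f x) : ‖v‖ ≤ L := by
  rcases eq_or_ne v 0 with rfl | hv0
  · simp
  obtain ⟨ρ, hρ, hball⟩ := exists_ball_subset_ball hx
  set y := x + (ρ/2) • (‖v‖⁻¹ • v) with hy
  have hnv : (0:ℝ) < ‖v‖ := norm_pos_iff.2 hv0
  have hyx : y - x = (ρ/2) • (‖v‖⁻¹ • v) := by simp [hy]
  have hnyx : ‖y - x‖ = ρ/2 := by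
    rw [hyx, norm_smul, norm_smul]
    simp [abs_of_pos hρ, abs_of_pos (inv_pos.2 hnv), inv_mul_cancel₀ hnv.ne']
  have hymem : y ∈ ball x₀ δ := hball (by
    rw [mem_ball, dist_eq_norm, hnyx]; linarith)
  have h1 := hv y hymem
  have hinner : ⟪v, y - x⟫ = (ρ/2) * ‖v‖ := by
    rw [hyx, real_inner_smul_right, real_inner_smul_right, real_inner_self_eq_norm_sq]
    field_simp
  have h2 : f y - f x ≤ L * (ρ/2) := by
    have := hlip.dist_le_mul y hymem x (hball (mem_ball_self hρ))
    rw [Real.dist_eq] at this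
    have := abs_le.1 this
    rw [dist_eq_norm, hnyx] at this
    linarith [this.2]
  have : (ρ/2) * ‖v‖ ≤ (L:ℝ) * (ρ/2) := by linarith [hinner ▸ h1]
  nlinarith

set_option maxHeartbeats 2000000 in
/-- Step 1 of the proof: if `f` is convex and `L`-Lipschitz on a ball `B(x₀, δ) ⊆ ℝ²`,
`ξ` is a Lipschitz curve in the ball with `ξ(0) = x₀` and `ξ'₊(0) = (1,0)`, and
`inf_{s ∈ [0,τ₁]} diam ∂f(ξ(s)) > 0`, then there is `τ₂ ∈ (0, τ₁)` with
`inf_{s ∈ (0,τ₂]} diam ⟪e₂, ∂f(ξ(s))⟫ > 0`, where `e₂ = (0,1)`. -/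
theorem exists_inf_diam_inner_e2_subdiff_pos
    (x₀ : EuclideanSpace ℝ (Fin 2)) (δ : ℝ) (hδ : 0 < δ)
    (f : EuclideanSpace ℝ (Fin 2) → ℝ) (L : NNReal)
    (hconv : ConvexOn ℝ (ball x₀ δ) f) (hlip : LipschitzOnWith L f (ball x₀ δ))
    (τ₁ : ℝ) (hτ₁ : 0 < τ₁) (ξ : ℝ → EuclideanSpace ℝ (Fin 2)) (Kξ : NNReal)
    (hξlip : LipschitzOnWith Kξ ξ (Icc 0 τ₁))
    (hξmem : ∀ s ∈ Icc (0 : ℝ) τ₁, ξ s ∈ ball x₀ δ) (hξ0 : ξ 0 = x₀)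
    (hder : Tendsto (fun h : ℝ => h⁻¹ • (ξ h - ξ 0)) (𝓝[>] 0) (𝓝 (mk2 1 0)))
    (hinf : 0 < sInf ((fun s => Metric.diam (subdiff (ball x₀ δ) f (ξ s))) '' Icc 0 τ₁)) :
    ∃ τ₂ ∈ Ioo 0 τ₁,
      0 < sInf ((fun s =>
        Metric.diam ((fun v => ⟪mk2 0 1, v⟫) '' subdiff (ball x₀ δ) f (ξ s))) ''
          Ioc 0 τ₂) := by
  obtain ⟨c, hcdef⟩ : ∃ c, c = sInf ((fun s =>
      Metric.diam (subdiff (ball x₀ δ) f (ξ s))) '' Icc 0 τ₁) := ⟨_, rfl⟩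
  have hc : 0 < c := hcdef ▸ hinf
  have hdiam : ∀ s ∈ Icc (0:ℝ) τ₁, c ≤ Metric.diam (subdiff (ball x₀ δ) f (ξ s)) := by
    intro s hs
    rw [hcdef]
    exact csInf_le ⟨0, by rintro a ⟨t, -, rfl⟩; exact Metric.diam_nonneg⟩ ⟨s, hs, rfl⟩
  clear hinf hcdef
  have hLpos : (0:ℝ) ≤ L := L.coe_nonneg
  have hKpos : (0:ℝ) ≤ Kξ := Kξ.coe_nonneg
  -- the line x₀ + t e₁
  have hline : ∀ t : ℝ, |t| < δ → x₀ + t • mk2 1 0 ∈ ball x₀ δ := by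
    intro t ht
    rw [mem_ball, dist_eq_norm, add_sub_cancel_left, norm_smul_e1]
    exact ht
  -- slopes
  obtain ⟨Q, hQdef⟩ : ∃ Q : Set ℝ,
      Q = (fun t => (f (x₀ + t • mk2 1 0) - f x₀) / t) '' Ioo 0 δ := ⟨_, rfl⟩
  have hQne : Q.Nonempty := by
    rw [hQdef]; exact ⟨_, ⟨δ/2, ⟨by linarith, by linarith⟩, rfl⟩⟩
  have hQbdd : ∀ a ∈ Q, -(L:ℝ) ≤ a := by
    rw [hQdef]
    rintro a ⟨t, ht, rfl⟩
    have hmem := hline t (by rw [abs_of_pos ht.1]; exact ht.2)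
    have := hlip.dist_le_mul (x₀ + t • mk2 1 0) hmem x₀ (mem_ball_self hδ)
    rw [Real.dist_eq, dist_eq_norm, add_sub_cancel_left, norm_smul_e1,
      abs_of_pos ht.1] at this
    have h2 := (abs_le.1 this).1
    rw [le_div_iff₀ ht.1]
    linarith
  obtain ⟨p, hpdef⟩ : ∃ p, p = sInf Q := ⟨_, rfl⟩
  have hp_le : ∀ t ∈ Ioo (0:ℝ) δ, p ≤ (f (x₀ + t • mk2 1 0) - f x₀) / t := by
    intro t ht
    rw [hpdef]
    exact csInf_le ⟨-(L:ℝ), hQbdd⟩ (by rw [hQdef]; exact ⟨t, ht, rfl⟩)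
  obtain ⟨t₀, ht₀, hqt₀⟩ : ∃ t₀ ∈ Ioo (0:ℝ) δ,
      (f (x₀ + t₀ • mk2 1 0) - f x₀) / t₀ < p + c/16 := by
    have h := exists_lt_of_csInf_lt hQne (show sInf Q < p + c/16 by rw [← hpdef]; linarith)
    obtain ⟨a, haQ, ha⟩ := h
    rw [hQdef] at haQ
    obtain ⟨t, ht, rfl⟩ := haQ
    exact ⟨t, ht, ha⟩
  clear hQne hQbdd hpdef hQdef
  -- derivative control
  obtain ⟨ε₀, hε₀def⟩ : ∃ ε₀ : ℝ, ε₀ = c/(8*(2*(L:ℝ)+1)) := ⟨_, rfl⟩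
  have hε₀ : 0 < ε₀ := by rw [hε₀def]; positivity
  have hε₀bound : 2 * (L:ℝ) * ε₀ ≤ c/8 := by
    rw [hε₀def,
      show 2*(L:ℝ)*(c/(8*(2*(L:ℝ)+1))) = (2*(L:ℝ)*c)/(8*(2*(L:ℝ)+1)) from by ring,
      div_le_div_iff₀ (by positivity) (by norm_num)]
    nlinarith
  have hev : {h : ℝ | ‖h⁻¹ • (ξ h - ξ 0) - mk2 1 0‖ < ε₀} ∈ 𝓝[>] (0:ℝ) := by
    have := Metric.tendsto_nhds.mp hder ε₀ hε₀
    filter_upwards [this] with h hh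
    rwa [dist_eq_norm] at hh
  obtain ⟨τ', hτ'mem, hsub⟩ := mem_nhdsGT_iff_exists_Ioo_subset.1 hev
  have hτ' : (0:ℝ) < τ' := hτ'mem
  clear hev hder
  obtain ⟨τ, hτdef⟩ : ∃ τ : ℝ,
      τ = min (min (τ₁/2) (δ/2)) (min (τ'/2) (t₀ * c/(16*(2*(L:ℝ)*(Kξ:ℝ)+1)))) := ⟨_, rfl⟩
  have hτpos : 0 < τ := by
    rw [hτdef]
    apply lt_min (lt_min (by linarith) (by linarith))
    refine lt_min (by linarith) (div_pos (by nlinarith [ht₀.1]) (by positivity))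
  have hτlt : τ < τ₁ := by
    rw [hτdef]
    exact lt_of_le_of_lt (le_trans (min_le_left _ _) (min_le_left _ _)) (by linarith)
  have hτbounds : ∀ s ∈ Ioc (0:ℝ) τ, s ≤ τ₁/2 ∧ s ≤ δ/2 ∧ s < τ' ∧
      s ≤ t₀ * c/(16*(2*(L:ℝ)*(Kξ:ℝ)+1)) := by
    intro s hs
    have h2 := hτdef ▸ hs.2
    refine ⟨le_trans h2 (le_trans (min_le_left _ _) (min_le_left _ _)),
      le_trans h2 (le_trans (min_le_left _ _) (min_le_right _ _)),
      lt_of_le_of_lt (le_trans h2 (le_trans (min_le_right _ _) (min_le_left _ _)))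
        (by linarith),
      le_trans h2 (le_trans (min_le_right _ _) (min_le_right _ _))⟩
  clear hτdef
  -- key estimate: first coordinates of subgradients are close to p
  have hkey : ∀ s ∈ Ioc (0:ℝ) τ, ∀ v ∈ subdiff (ball x₀ δ) f (ξ s), |v 0 - p| ≤ c/8 := by
    intro s hs v hv
    have hs0 : 0 < s := hs.1
    obtain ⟨hsτ₁, hsδ, hsτ', hst₀⟩ := hτbounds s hs
    have hsmem : s ∈ Icc (0:ℝ) τ₁ := ⟨hs0.le, by linarith⟩
    have hξs : ξ s ∈ ball x₀ δ := hξmem s hsmem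
    have hvnorm : ‖v‖ ≤ L := norm_subdiff_le hlip hξs hv
    have hdistξ : ‖ξ s - x₀‖ ≤ (Kξ:ℝ) * s := by
      have := hξlip.dist_le_mul s hsmem 0 ⟨le_refl _, hτ₁.le⟩
      rwa [hξ0, Real.dist_eq, sub_zero, abs_of_pos hs0, dist_eq_norm] at this
    have hr : ‖ξ s - x₀ - s • mk2 1 0‖ ≤ s * ε₀ := by
      have h1 := hsub ⟨hs0, hsτ'⟩
      have h2 : ξ s - x₀ - s • mk2 1 0 = s • (s⁻¹ • (ξ s - ξ 0) - mk2 1 0) := by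
        rw [smul_sub, smul_smul, mul_inv_cancel₀ hs0.ne', one_smul, hξ0]
      rw [h2, norm_smul, Real.norm_eq_abs, abs_of_pos hs0]
      exact mul_le_mul_of_nonneg_left (le_of_lt h1) hs0.le
    have hlinemem : x₀ + s • mk2 1 0 ∈ ball x₀ δ :=
      hline s (by rw [abs_of_pos hs0]; linarith)
    have ht₀mem : x₀ + t₀ • mk2 1 0 ∈ ball x₀ δ :=
      hline t₀ (by rw [abs_of_pos ht₀.1]; exact ht₀.2)
    -- lower bound
    have hlow : p - c/8 ≤ v 0 := by
      have h1 : f (ξ s) + ⟪v, x₀ - ξ s⟫ ≤ f x₀ := hv x₀ (mem_ball_self hδ)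
      have hneg : ⟪v, x₀ - ξ s⟫ = -⟪v, ξ s - x₀⟫ := by
        rw [← inner_neg_right, neg_sub]
      have h1' : f (ξ s) - f x₀ ≤ ⟪v, ξ s - x₀⟫ := by
        rw [hneg] at h1; linarith
      have h2 : f (x₀ + s • mk2 1 0) - f (ξ s) ≤ (L:ℝ) * (s * ε₀) := by
        have hd := hlip.dist_le_mul (x₀ + s • mk2 1 0) hlinemem (ξ s) hξs
        rw [Real.dist_eq] at hd
        have hd2 := (abs_le.1 hd).2
        have hdd : dist (x₀ + s • mk2 1 0) (ξ s) ≤ s * ε₀ := by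
          rw [dist_eq_norm, ← norm_neg]
          have hn : -(x₀ + s • mk2 1 0 - ξ s) = ξ s - x₀ - s • mk2 1 0 := by abel
          rw [hn]; exact hr
        nlinarith [hd2]
      have h3 : s * p ≤ f (x₀ + s • mk2 1 0) - f x₀ := by
        have := hp_le s ⟨hs0, by linarith⟩
        rw [le_div_iff₀ hs0] at this
        linarith
      have h4 : ⟪v, ξ s - x₀ - s • mk2 1 0⟫ = ⟪v, ξ s - x₀⟫ - s * v 0 := by
        have e1 : ⟪v, ξ s - x₀ - s • mk2 1 0⟫
            = ⟪v, ξ s - x₀⟫ - ⟪v, s • mk2 1 0⟫ := inner_sub_right v _ _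
        rw [e1, inner_smul_e1]
      have h5 : ⟪v, ξ s - x₀ - s • mk2 1 0⟫ ≤ (L:ℝ) * (s * ε₀) :=
        le_trans (real_inner_le_norm _ _)
          (mul_le_mul hvnorm hr (norm_nonneg _) hLpos)
      have h6 : s * p - 2 * ((L:ℝ) * (s * ε₀)) ≤ s * v 0 := by
        have := h4 ▸ h5
        linarith
      have h7 : p - 2 * ((L:ℝ) * ε₀) ≤ v 0 := by nlinarith
      linarith
    -- upper bound
    have hup : v 0 ≤ p + c/8 := by
      have h1 : f (ξ s) + ⟪v, x₀ + t₀ • mk2 1 0 - ξ s⟫ ≤ f (x₀ + t₀ • mk2 1 0) :=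
        hv _ ht₀mem
      have h2 : ⟪v, x₀ + t₀ • mk2 1 0 - ξ s⟫ = t₀ * v 0 + ⟪v, x₀ - ξ s⟫ := by
        have hn : x₀ + t₀ • mk2 1 0 - ξ s = t₀ • mk2 1 0 + (x₀ - ξ s) := by abel
        rw [hn, inner_add_right, inner_smul_e1]
      have h3 : -((L:ℝ) * ((Kξ:ℝ) * s)) ≤ ⟪v, x₀ - ξ s⟫ := by
        have habs : |⟪v, x₀ - ξ s⟫| ≤ ‖v‖ * ‖x₀ - ξ s‖ := abs_real_inner_le_norm _ _
        have hn : ‖x₀ - ξ s‖ ≤ (Kξ:ℝ) * s := by rw [← norm_neg, neg_sub]; exact hdistξ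
        have h4 : ‖v‖ * ‖x₀ - ξ s‖ ≤ (L:ℝ) * ((Kξ:ℝ) * s) :=
          mul_le_mul hvnorm hn (norm_nonneg _) hLpos
        have := (abs_le.1 habs).1
        linarith
      have h5 : f x₀ - (L:ℝ) * ((Kξ:ℝ) * s) ≤ f (ξ s) := by
        have hd := hlip.dist_le_mul x₀ (mem_ball_self hδ) (ξ s) hξs
        rw [Real.dist_eq, dist_eq_norm] at hd
        have hd2 := (abs_le.1 hd).2
        have h6 : (L:ℝ) * ‖x₀ - ξ s‖ ≤ (L:ℝ) * ((Kξ:ℝ) * s) := by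
          apply mul_le_mul_of_nonneg_left _ hLpos
          rw [← norm_neg, neg_sub]; exact hdistξ
        linarith
      have h6 : t₀ * v 0 ≤ f (x₀ + t₀ • mk2 1 0) - f x₀ + 2 * ((L:ℝ) * ((Kξ:ℝ) * s)) := by
        rw [h2] at h1
        linarith
      have h7 : f (x₀ + t₀ • mk2 1 0) - f x₀ < t₀ * (p + c/16) := by
        rw [div_lt_iff₀ ht₀.1] at hqt₀
        linarith
      have h8 : 2 * ((L:ℝ) * ((Kξ:ℝ) * s)) ≤ t₀ * (c/16) := by
        rw [le_div_iff₀ (by positivity : (0:ℝ) < 16*(2*(L:ℝ)*(Kξ:ℝ)+1))] at hst₀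
        nlinarith [mul_nonneg hLpos hKpos, hs0.le]
      have h9 : t₀ * v 0 ≤ t₀ * (p + c/8) := by nlinarith
      exact le_of_mul_le_mul_left (by linarith) ht₀.1
    rw [abs_le]
    exact ⟨by linarith, by linarith⟩
  -- conclusion
  refine ⟨τ, ⟨hτpos, hτlt⟩, ?_⟩
  have hfinal : c/2 ≤ sInf ((fun s =>
      Metric.diam ((fun v => ⟪mk2 0 1, v⟫) '' subdiff (ball x₀ δ) f (ξ s))) '' Ioc 0 τ) := by
    apply le_csInf ((Set.nonempty_Ioc.2 hτpos).image _)
    rintro b ⟨s, hs, rfl⟩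
    show c/2 ≤ Metric.diam ((fun v => ⟪mk2 0 1, v⟫) '' subdiff (ball x₀ δ) f (ξ s))
    have hsmem : s ∈ Icc (0:ℝ) τ₁ := ⟨hs.1.le, le_trans hs.2 hτlt.le⟩
    have hξs : ξ s ∈ ball x₀ δ := hξmem s hsmem
    have hex : ∃ v ∈ subdiff (ball x₀ δ) f (ξ s),
        ∃ w ∈ subdiff (ball x₀ δ) f (ξ s), 3*c/4 < dist v w := by
      by_contra h
      push_neg at h
      have h2 := Metric.diam_le_of_forall_dist_le (by linarith : (0:ℝ) ≤ 3*c/4) h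
      have := hdiam s hsmem
      linarith
    obtain ⟨v, hvS, w, hwS, hvw⟩ := hex
    have hv0 := hkey s hs v hvS
    have hw0 := hkey s hs w hwS
    have h01 : |v 0 - w 0| ≤ c/4 := by
      calc |v 0 - w 0| = |(v 0 - p) - (w 0 - p)| := by ring_nf
        _ ≤ |v 0 - p| + |w 0 - p| := abs_sub _ _
        _ ≤ c/4 := by linarith
    have hdsq : dist v w ^ 2 = (v 0 - w 0)^2 + (v 1 - w 1)^2 := by
      rw [dist_eq_two]
      exact Real.sq_sqrt (by positivity)
    have h1sq : (c/2)^2 < (v 1 - w 1)^2 := by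
      nlinarith [dist_nonneg (x := v) (y := w), abs_nonneg (v 0 - w 0), sq_abs (v 0 - w 0)]
    have h1 : c/2 ≤ |v 1 - w 1| := by
      by_contra h
      push_neg at h
      nlinarith [abs_nonneg (v 1 - w 1), sq_abs (v 1 - w 1)]
    have hPbdd : Bornology.IsBounded
        ((fun v => ⟪mk2 0 1, v⟫) '' subdiff (ball x₀ δ) f (ξ s)) := by
      apply (isBounded_Icc (-(L:ℝ)) (L:ℝ)).subset
      rintro a ⟨u, huS, rfl⟩
      have h2 : |⟪mk2 0 1, u⟫| ≤ (L:ℝ) := by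
        rw [inner_mk2_01]
        exact le_trans (abs_apply1_le_norm u) (norm_subdiff_le hlip hξs huS)
      exact abs_le.1 h2
    have hd := Metric.dist_le_diam_of_mem hPbdd ⟨v, hvS, rfl⟩ ⟨w, hwS, rfl⟩
    simp only [inner_mk2_01, Real.dist_eq] at hd
    simp only [inner_mk2_01]
    linarith
  linarith
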